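/- Diagonal entries and invertibility of the transformation matrix: For all α', α > 0 and u', u ∈ ℝ, every diagonal entry satisfies ℙ_{n,n} = (α'/α)^{n+1} for all n ∈ ℕ; consequently, for every N ∈ ℕ the (N+1)×(N+1) matrix (ℙ_{n,m})_{0 ≤ n, m ≤ N} is invertible. -/

import Mathlib

open MeasureTheory Real Finset

/-- Physicists' Hermite polynomials: `H 0 x = 1`, `H 1 x = 2x`,
`H (n+1) x = 2x · H n x − 2n · H (n−1) x`. -/
noncomputable def physHermite : ℕ → ℝ → ℝ
  | 0 => fun _ => 1
  | 1 => fun x => 2 * x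
  | (n + 2) => fun x => 2 * x * physHermite (n + 1) x - 2 * ((n : ℝ) + 1) * physHermite n x

/-- Asymmetrically weighted Hermite function
`ψ_n^{α,u}(v) = (π·2^n·n!)^{-1/2} · H_n((v−u)/α) · exp(−((v−u)/α)²)`. -/
noncomputable def awHermite (α u : ℝ) (n : ℕ) (v : ℝ) : ℝ :=
  (Real.sqrt (Real.pi * 2 ^ n * (n.factorial : ℝ)))⁻¹ * physHermite n ((v - u) / α) *
    Real.exp (-((v - u) / α) ^ 2)

/-- The weight `ω(v) = √π · α⁻¹ · exp(((v−u)/α)²)`. -/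
noncomputable def hermiteWeight (α u : ℝ) (v : ℝ) : ℝ :=
  Real.sqrt Real.pi * α⁻¹ * Real.exp (((v - u) / α) ^ 2)

/-- Transformation matrix entries `ℙ_{n,m} = ∫ ψ_m^{α',u'}(v) · ψ_n^{α,u}(v) · ω(v) dv`. -/
noncomputable def transferMatrix (α' u' α u : ℝ) (n m : ℕ) : ℝ :=
  ∫ v : ℝ, awHermite α' u' m v * awHermite α u n v * hermiteWeight α u v

/-!
After the substitution `x = (v - u') / α'` the weight `ω` cancels the Gaussian factor of
`ψ_n^{α,u}`, so `ℙ_{n,m}` is a multiple of `∫ p(x) H_m(x) e^{-x²} dx`, where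
`p(x) = H_n((α'/α) x + (u' - u)/α)` has degree `n` and leading coefficient `2ⁿ (α'/α)ⁿ`.
Since `(H_m e^{-x²})' = -H_{m+1} e^{-x²}`, integrating by parts `m` times turns this into
`∫ p⁽ᵐ⁾(x) e^{-x²} dx`. It vanishes for `n < m`, so the matrix is lower triangular, and for
`n = m` it is `n! 2ⁿ (α'/α)ⁿ √π`, which the normalisations turn into `(α'/α)^(n+1) ≠ 0`.
-/

theorem integral_comp_sub_div {E : Type*} [NormedAddCommGroup E] [NormedSpace ℝ E]
    (g : ℝ → E) (c a : ℝ) : ∫ v, g ((v - c) / a) = |a| • ∫ x, g x := by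
  rw [integral_sub_right_eq_self (fun w => g (w / a)) c, Measure.integral_comp_div]

open Polynomial

namespace Polynomial

variable {R : Type*} [Semiring R]

theorem iterate_derivative_natDegree (p : R[X]) :
    derivative^[p.natDegree] p = C (p.natDegree.factorial * p.leadingCoeff) := by
  have hconst : (derivative^[p.natDegree] p).natDegree ≤ 0 :=
    (natDegree_iterate_derivative p _).trans (by rw [Nat.sub_self])
  rw [eq_C_of_natDegree_le_zero hconst, coeff_iterate_derivative, zero_add,
    Nat.descFactorial_self, nsmul_eq_mul, leadingCoeff]

end Polynomial

/-- Defined so that `(H n e^{-x²})' = -H (n + 1) e^{-x²}`; `eval_physHermitePoly` identifies it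
with `physHermite`. -/
noncomputable def physHermitePoly : ℕ → ℝ[X]
  | 0 => 1
  | n + 1 => C 2 * X * physHermitePoly n - derivative (physHermitePoly n)

theorem derivative_physHermitePoly_succ (n : ℕ) :
    derivative (physHermitePoly (n + 1)) = C (2 * (n + 1 : ℝ)) * physHermitePoly n := by
  induction n with
  | zero => simp [physHermitePoly]
  | succ n ih =>
    rw [physHermitePoly, derivative_sub]
    simp only [derivative_mul, derivative_C, derivative_X, ih]
    rw [physHermitePoly]
    simp only [map_mul, map_add, map_natCast, map_one, map_ofNat]
    push_cast
    ring

theorem eval_physHermitePoly : ∀ (n : ℕ) (x : ℝ), (physHermitePoly n).eval x = physHermite n x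
  | 0, x => by simp [physHermitePoly, physHermite]
  | 1, x => by simp [physHermitePoly, physHermite]
  | n + 2, x => by
    rw [physHermitePoly, derivative_physHermitePoly_succ, physHermite]
    simp [eval_physHermitePoly (n + 1) x, eval_physHermitePoly n x]

theorem degree_physHermitePoly_and_leadingCoeff (n : ℕ) :
    (physHermitePoly n).degree = n ∧ (physHermitePoly n).leadingCoeff = 2 ^ n := by
  induction n with
  | zero => simp [physHermitePoly]
  | succ n ih =>
    obtain ⟨hdeg, hlead⟩ := ih
    have hne : physHermitePoly n ≠ 0 := by simp [← leadingCoeff_ne_zero, hlead]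
    have hmain : (C 2 * X * physHermitePoly n).degree = ↑(n + 1) := by
      rw [degree_mul, degree_C_mul_X two_ne_zero, hdeg]; norm_cast; ring
    have hlt : (derivative (physHermitePoly n)).degree < (C 2 * X * physHermitePoly n).degree :=
      (degree_derivative_lt hne).trans (by rw [hmain, hdeg]; norm_cast; omega)
    rw [physHermitePoly, degree_sub_eq_left_of_degree_lt hlt, leadingCoeff_sub_of_degree_lt hlt,
      hmain, leadingCoeff_mul, leadingCoeff_C_mul_X, hlead, pow_succ']
    exact ⟨rfl, rfl⟩

theorem integrable_eval_mul_exp_neg_sq (p : ℝ[X]) :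
    Integrable fun x : ℝ => p.eval x * exp (-x ^ 2) := by
  induction p using Polynomial.induction_on' with
  | add p q hp hq =>
    simp only [eval_add, add_mul]
    exact hp.add hq
  | monomial n a =>
    have hpow : Integrable fun x : ℝ => x ^ n * exp (-1 * x ^ 2) := by
      simpa only [rpow_natCast] using integrable_rpow_mul_exp_neg_mul_sq (s := n) one_pos
        (neg_one_lt_zero.trans_le n.cast_nonneg)
    simpa only [eval_monomial, neg_one_mul, mul_assoc] using hpow.const_mul a

theorem hasDerivAt_eval_mul_exp_neg_sq (p : ℝ[X]) (x : ℝ) :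
    HasDerivAt (fun y : ℝ => p.eval y * exp (-y ^ 2))
      ((derivative p - C 2 * X * p).eval x * exp (-x ^ 2)) x := by
  have hexp : HasDerivAt (fun y : ℝ => exp (-y ^ 2)) (exp (-x ^ 2) * -(2 * x)) x := by
    simpa using ((hasDerivAt_pow 2 x).neg).exp
  refine ((p.hasDerivAt x).fun_mul hexp).congr_deriv ?_
  simp only [eval_sub, eval_mul, eval_C, eval_X]
  ring

noncomputable def gaussianIntegral : ℝ[X] →ₗ[ℝ] ℝ where
  toFun p := ∫ x, p.eval x * exp (-x ^ 2)
  map_add' p q := by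
    simp only [eval_add, add_mul]
    exact integral_add (integrable_eval_mul_exp_neg_sq p) (integrable_eval_mul_exp_neg_sq q)
  map_smul' c p := by
    simp only [eval_smul, smul_eq_mul, mul_assoc, integral_const_mul, RingHom.id_apply]

theorem gaussianIntegral_apply (p : ℝ[X]) :
    gaussianIntegral p = ∫ x, p.eval x * exp (-x ^ 2) :=
  rfl

theorem gaussianIntegral_C (c : ℝ) : gaussianIntegral (C c) = c * √π := by
  simpa [gaussianIntegral_apply, integral_const_mul] using
    congrArg (c * ·) (integral_gaussian 1)

theorem gaussianIntegral_derivative_sub (p : ℝ[X]) :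
    gaussianIntegral (derivative p - C 2 * X * p) = 0 :=
  integral_eq_zero_of_hasDerivAt_of_integrable (hasDerivAt_eval_mul_exp_neg_sq p)
    (integrable_eval_mul_exp_neg_sq _) (integrable_eval_mul_exp_neg_sq p)

theorem gaussianIntegral_mul_physHermitePoly_succ (f : ℝ[X]) (n : ℕ) :
    gaussianIntegral (f * physHermitePoly (n + 1)) =
      gaussianIntegral (derivative f * physHermitePoly n) := by
  have h := gaussianIntegral_derivative_sub (f * physHermitePoly n)
  rwa [derivative_mul, show derivative f * physHermitePoly n + f * derivative (physHermitePoly n)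
      - C 2 * X * (f * physHermitePoly n) =
      derivative f * physHermitePoly n - f * physHermitePoly (n + 1) by
    rw [physHermitePoly]; ring, map_sub, sub_eq_zero, eq_comm] at h

theorem gaussianIntegral_mul_physHermitePoly (f : ℝ[X]) (n : ℕ) :
    gaussianIntegral (f * physHermitePoly n) = gaussianIntegral (derivative^[n] f) := by
  induction n generalizing f with
  | zero => simp [physHermitePoly]
  | succ n ih =>
    rw [gaussianIntegral_mul_physHermitePoly_succ, ih, Function.iterate_succ_apply]

theorem transferMatrix_eq_gaussianIntegral (α' u' α u : ℝ) (hα' : 0 < α') (n m : ℕ) :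
    transferMatrix α' u' α u n m =
      (√(π * 2 ^ m * m.factorial))⁻¹ * (√(π * 2 ^ n * n.factorial))⁻¹ * √π * (α' / α) *
        gaussianIntegral
          ((physHermitePoly n).comp (C (α' / α) * X + C ((u' - u) / α)) * physHermitePoly m) := by
  set P := (physHermitePoly n).comp (C (α' / α) * X + C ((u' - u) / α)) * physHermitePoly m
  have hpoint : ∀ v, awHermite α' u' m v * awHermite α u n v * hermiteWeight α u v =
      (√(π * 2 ^ m * m.factorial))⁻¹ * (√(π * 2 ^ n * n.factorial))⁻¹ * √π * α⁻¹ *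
        (P.eval ((v - u') / α') * exp (-((v - u') / α') ^ 2)) := by
    intro v
    have hlin : α' / α * ((v - u') / α') + (u' - u) / α = (v - u) / α := by
      field_simp
      ring
    have hexp : exp (-((v - u) / α) ^ 2) * exp (((v - u) / α) ^ 2) = 1 := by
      rw [← exp_add, neg_add_cancel, exp_zero]
    simp only [P, awHermite, hermiteWeight, eval_mul, eval_comp, eval_add, eval_C, eval_X,
      hlin, eval_physHermitePoly]
    linear_combination (√(π * 2 ^ m * m.factorial))⁻¹ * (√(π * 2 ^ n * n.factorial))⁻¹ * √π *
      α⁻¹ * physHermite m ((v - u') / α') * physHermite n ((v - u) / α) *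
      exp (-((v - u') / α') ^ 2) * hexp
  simp_rw [transferMatrix, hpoint, integral_const_mul, integral_comp_sub_div
    (fun x => P.eval x * exp (-x ^ 2)), abs_of_pos hα', smul_eq_mul, gaussianIntegral_apply]
  ring

theorem natDegree_physHermitePoly_comp_and_leadingCoeff {a : ℝ} (ha : a ≠ 0) (b : ℝ) (n : ℕ) :
    ((physHermitePoly n).comp (C a * X + C b)).natDegree = n ∧
      ((physHermitePoly n).comp (C a * X + C b)).leadingCoeff = 2 ^ n * a ^ n := by
  obtain ⟨hdeg, hlead⟩ := degree_physHermitePoly_and_leadingCoeff n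
  have hlin := natDegree_linear (b := b) ha
  rw [natDegree_comp, leadingCoeff_comp (by rw [hlin]; exact one_ne_zero), hlin,
    natDegree_eq_of_degree_eq_some hdeg, hlead, leadingCoeff_linear ha, mul_one]
  exact ⟨rfl, rfl⟩

theorem transferMatrix_self {α' α : ℝ} (u' u : ℝ) (hα' : 0 < α') (hα : α ≠ 0) (n : ℕ) :
    transferMatrix α' u' α u n n = (α' / α) ^ (n + 1) := by
  obtain ⟨hdeg, hlead⟩ :=
    natDegree_physHermitePoly_comp_and_leadingCoeff (div_ne_zero hα'.ne' hα) ((u' - u) / α) n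
  have hconst := iterate_derivative_natDegree ((physHermitePoly n).comp
    (C (α' / α) * X + C ((u' - u) / α)))
  rw [hdeg, hlead] at hconst
  rw [transferMatrix_eq_gaussianIntegral _ _ _ _ hα', gaussianIntegral_mul_physHermitePoly, hconst,
    gaussianIntegral_C]
  field_simp
  rw [sq_sqrt pi_pos.le, sq_sqrt (by positivity), pow_succ]
  field_simp

theorem transferMatrix_eq_zero_of_lt {α' α : ℝ} (u' u : ℝ) (hα' : 0 < α') (hα : α ≠ 0) {n m : ℕ}
    (hnm : n < m) : transferMatrix α' u' α u n m = 0 := by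
  obtain ⟨hdeg, -⟩ :=
    natDegree_physHermitePoly_comp_and_leadingCoeff (div_ne_zero hα'.ne' hα) ((u' - u) / α) n
  rw [transferMatrix_eq_gaussianIntegral _ _ _ _ hα', gaussianIntegral_mul_physHermitePoly,
    iterate_derivative_eq_zero (hdeg.trans_lt hnm), map_zero, mul_zero]

/-- Diagonal entries and invertibility of the transformation matrix. -/
theorem transferMatrix_diagonal_and_invertible (α' α u' u : ℝ) (hα' : 0 < α') (hα : 0 < α) :
    (∀ n : ℕ, transferMatrix α' u' α u n n = (α' / α) ^ (n + 1)) ∧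
    ∀ N : ℕ, IsUnit (Matrix.of
      (fun i j : Fin (N + 1) => transferMatrix α' u' α u (i : ℕ) (j : ℕ))) := by
  refine ⟨transferMatrix_self u' u hα' hα.ne', fun N => ?_⟩
  have hlower : (Matrix.of fun i j : Fin (N + 1) =>
      transferMatrix α' u' α u (i : ℕ) (j : ℕ)).IsLowerTriangular :=
    fun i j hij => transferMatrix_eq_zero_of_lt u' u hα' hα.ne' hij
  rw [Matrix.isUnit_iff_isUnit_det, Matrix.det_of_isLowerTriangular _ hlower, isUnit_iff_ne_zero,
    prod_ne_zero_iff]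
  intro i _
  rw [Matrix.of_apply, transferMatrix_self u' u hα' hα.ne']
  exact pow_ne_zero _ (div_ne_zero hα'.ne' hα.ne')
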